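/- arXiv:1408.5119 — 4 statements merged into one kernel-verified Lean document; each statement's English description precedes it below -/
import Mathlib

section
/- The Motzkin polynomial M(x,y,z) = x^4 y^2 + x^2 y^4 - 3 x^2 y^2 z^2 + z^6 is not a sum of squares of polynomials. -/
/-!
Newton polytope argument. If `p = ∑ qᵢ²` and `w` is a weight on exponents, take, among all
monomials of all `qᵢ`, one of largest `w`-weight (ties broken lexicographically): the
coefficient of its square in `∑ qᵢ²` is a nonzero sum of squares, so every monomial of every
`qᵢ` has weight at most half the largest weight of a monomial of `p`. For the Motzkin
polynomial the weights `(1,1,1)`, `(-1,-1,-1)`, `(-2,1,0)`, `(1,-2,0)` confine the exponents of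
the `qᵢ` to `(2,1,0)`, `(1,2,0)`, `(0,0,3)`, `(1,1,1)`, and the only way to write `(2,2,2)` as a
sum of two of them is `(1,1,1) + (1,1,1)`. So the coefficient of `x²y²z²` in `∑ qᵢ²` is
`∑ (coeff of xyz in qᵢ)² ≥ 0`, whereas in the Motzkin polynomial it is `-3`.
-/

open MvPolynomial Finset
open Finsupp (single weight equivFunOnFinite)

variable {σ ι R : Type*}

section CommSemiring

variable [CommSemiring R] {s : Finset ι} {q : ι → MvPolynomial σ R}

theorem MvPolynomial.coeff_add_self_sum_sq (u : σ →₀ ℕ)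
    (h : ∀ i ∈ s, ∀ v ∈ (q i).support, ∀ v' ∈ (q i).support, v + v' = u + u → v = u) :
    coeff (u + u) (∑ i ∈ s, q i ^ 2) = ∑ i ∈ s, coeff u (q i) ^ 2 := by
  classical
  rw [coeff_sum]
  refine sum_congr rfl fun i hi => ?_
  rw [sq, sq, coeff_mul, Finset.sum_eq_single (u, u)]
  · rintro ⟨v, v'⟩ hvv' hne
    rw [HasAntidiagonal.mem_antidiagonal] at hvv'
    by_contra hprod
    dsimp only at hvv' hprod
    obtain rfl : v = u := h i hi v (mem_support_iff.2 (left_ne_zero_of_mul hprod)) v'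
      (mem_support_iff.2 (right_ne_zero_of_mul hprod)) hvv'
    exact hne (Prod.ext rfl (add_left_cancel hvv'))
  · exact fun hu => (hu (by simp)).elim

end CommSemiring

section LinearOrderedRing

variable [CommRing R] [LinearOrder R] [IsStrictOrderedRing R] {s : Finset ι}
  {q : ι → MvPolynomial σ R}

theorem MvPolynomial.exists_le_add_self_mem_support_sum_sq {Γ : Type*} [AddCommMonoid Γ]
    [LinearOrder Γ] [IsOrderedCancelAddMonoid Γ] (φ : (σ →₀ ℕ) →+ Γ)
    (hφ : Function.Injective φ) {i : ι} (hi : i ∈ s) {u : σ →₀ ℕ} (hu : u ∈ (q i).support) :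
    ∃ v, φ u ≤ φ v ∧ v + v ∈ (∑ i ∈ s, q i ^ 2).support := by
  classical
  have hT : u ∈ s.biUnion fun i => (q i).support := mem_biUnion.2 ⟨i, hi, hu⟩
  obtain ⟨v, hvT, hmax⟩ := exists_max_image _ φ ⟨u, hT⟩
  obtain ⟨j, hj, hvj⟩ := mem_biUnion.1 hvT
  refine ⟨v, hmax u hT, ?_⟩
  rw [mem_support_iff, coeff_add_self_sum_sq v]
  · refine (sum_pos' (fun _ _ => sq_nonneg _) ⟨j, hj, ?_⟩).ne'
    have := mem_support_iff.1 hvj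
    positivity
  · intro k hk w hw w' hw' hsum
    by_contra hne
    have hlt : φ w < φ v := (hmax w (mem_biUnion.2 ⟨k, hk, hw⟩)).lt_of_ne (hφ.ne hne)
    have := add_lt_add_of_lt_of_le hlt (hmax w' (mem_biUnion.2 ⟨k, hk, hw'⟩))
    rw [← map_add, ← map_add, hsum] at this
    exact this.false

theorem MvPolynomial.weight_le_of_mem_support_sum_sq [LinearOrder σ] (w : σ → ℤ) {k : ℤ}
    (hk : ∀ v ∈ (∑ i ∈ s, q i ^ 2).support, weight w v ≤ 2 * k) {i : ι} (hi : i ∈ s)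
    {u : σ →₀ ℕ} (hu : u ∈ (q i).support) : weight w u ≤ k := by
  let φ : (σ →₀ ℕ) →+ ℤ ×ₗ Lex (σ →₀ ℕ) :=
    (toLexAddEquiv _).toAddMonoidHom.comp ((weight w).prod (toLexAddEquiv _).toAddMonoidHom)
  have hφ : Function.Injective φ := fun a b hab =>
    toLex.injective (congrArg (fun x => (ofLex x).2) hab)
  obtain ⟨v, hle, hv⟩ := exists_le_add_self_mem_support_sum_sq φ hφ hi hu
  have huv : weight w u ≤ weight w v := (Prod.Lex.monotone_fst _ _ hle : _)
  have := hk _ hv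
  rw [map_add] at this
  omega

end LinearOrderedRing

noncomputable def motzkin : MvPolynomial (Fin 3) ℝ :=
  X 0 ^ 4 * X 1 ^ 2 + X 0 ^ 2 * X 1 ^ 4 - 3 * X 0 ^ 2 * X 1 ^ 2 * X 2 ^ 2 + X 2 ^ 6

theorem motzkin_eq_sum_monomial : motzkin =
    monomial (single 0 4 + single 1 2) 1 + monomial (single 0 2 + single 1 4) 1
      - monomial (single 0 2 + single 1 2 + single 2 2) 3 + monomial (single 2 6) 1 := by
  rw [motzkin, show (3 : MvPolynomial (Fin 3) ℝ) = C 3 from (map_ofNat C 3).symm]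
  simp only [X_pow_eq_monomial, monomial_mul, C_mul_monomial, mul_one]

theorem mem_support_motzkin {u : Fin 3 →₀ ℕ} (hu : u ∈ motzkin.support) :
    u = single 0 4 + single 1 2 ∨ u = single 0 2 + single 1 4 ∨
      u = single 0 2 + single 1 2 + single 2 2 ∨ u = single 2 6 := by
  rw [mem_support_iff, motzkin_eq_sum_monomial] at hu
  simp only [coeff_add, coeff_sub, coeff_monomial] at hu
  split_ifs at hu <;> simp_all [eq_comm]

theorem weight_fin_three (w : Fin 3 → ℤ) (u : Fin 3 →₀ ℕ) :
    weight w u = u 0 * w 0 + u 1 * w 1 + u 2 * w 2 := by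
  simp [Finsupp.weight_eq_sum, Fin.sum_univ_three]

theorem weight_le_of_mem_support_motzkin {w : Fin 3 → ℤ} {k : ℤ}
    (hw : 4 * w 0 + 2 * w 1 ≤ 2 * k ∧ 2 * w 0 + 4 * w 1 ≤ 2 * k ∧
      2 * w 0 + 2 * w 1 + 2 * w 2 ≤ 2 * k ∧ 6 * w 2 ≤ 2 * k)
    {v : Fin 3 →₀ ℕ} (hv : v ∈ motzkin.support) : weight w v ≤ 2 * k := by
  rcases mem_support_motzkin hv with rfl | rfl | rfl | rfl <;>
    simp only [map_add, Finsupp.weight_single, nsmul_eq_mul, Nat.cast_ofNat] <;> omega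

theorem coeff_motzkin_xyz_sq :
    coeff (equivFunOnFinite.symm 1 + equivFunOnFinite.symm 1) motzkin = -3 := by
  simp [motzkin_eq_sum_monomial, coeff_monomial, Finsupp.ext_iff, Fin.forall_fin_succ]

section SumOfSquares

variable {s : Finset ι} {q : ι → MvPolynomial (Fin 3) ℝ}

theorem degrees_of_mem_support_of_motzkin_eq_sum_sq (h : motzkin = ∑ i ∈ s, q i ^ 2) {i : ι}
    (hi : i ∈ s) {u : Fin 3 →₀ ℕ} (hu : u ∈ (q i).support) :
    u 0 + u 1 + u 2 = 3 ∧ u 1 ≤ 2 * u 0 ∧ u 0 ≤ 2 * u 1 := by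
  have bound (w : Fin 3 → ℤ) (k : ℤ)
      (hw : 4 * w 0 + 2 * w 1 ≤ 2 * k ∧ 2 * w 0 + 4 * w 1 ≤ 2 * k ∧
        2 * w 0 + 2 * w 1 + 2 * w 2 ≤ 2 * k ∧ 6 * w 2 ≤ 2 * k) :
      u 0 * w 0 + u 1 * w 1 + u 2 * w 2 ≤ k := by
    rw [← weight_fin_three]
    exact weight_le_of_mem_support_sum_sq w
      (h ▸ fun _ => weight_le_of_mem_support_motzkin hw) hi hu
  have h₁ : (u 0 : ℤ) * 1 + u 1 * 1 + u 2 * 1 ≤ 3 := bound ![1, 1, 1] 3 (by decide)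
  have h₂ : (u 0 : ℤ) * -1 + u 1 * -1 + u 2 * -1 ≤ -3 := bound ![-1, -1, -1] (-3) (by decide)
  have h₃ : (u 0 : ℤ) * -2 + u 1 * 1 + u 2 * 0 ≤ 0 := bound ![-2, 1, 0] 0 (by decide)
  have h₄ : (u 0 : ℤ) * 1 + u 1 * -2 + u 2 * 0 ≤ 0 := bound ![1, -2, 0] 0 (by decide)
  omega

theorem coeff_xyz_sq_of_motzkin_eq_sum_sq (h : motzkin = ∑ i ∈ s, q i ^ 2) :
    coeff (equivFunOnFinite.symm 1 + equivFunOnFinite.symm 1) motzkin =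
      ∑ i ∈ s, coeff (equivFunOnFinite.symm 1) (q i) ^ 2 := by
  set u : Fin 3 →₀ ℕ := equivFunOnFinite.symm 1
  rw [h]
  refine coeff_add_self_sum_sq u fun i hi v hv v' hv' hsum => ?_
  have hv := degrees_of_mem_support_of_motzkin_eq_sum_sq h hi hv
  have hv' := degrees_of_mem_support_of_motzkin_eq_sum_sq h hi hv'
  have hsum0 := DFunLike.congr_fun hsum 0
  have hsum1 := DFunLike.congr_fun hsum 1
  have hsum2 := DFunLike.congr_fun hsum 2
  simp only [u, Finsupp.coe_add, Pi.add_apply, Finsupp.coe_equivFunOnFinite_symm, Pi.one_apply]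
    at hsum0 hsum1 hsum2
  obtain ⟨h0, h1, h2⟩ : v 0 = 1 ∧ v 1 = 1 ∧ v 2 = 1 := by omega
  ext j
  fin_cases j <;> simp [u, h0, h1, h2]

end SumOfSquares

theorem motzkin_not_sum_of_squares :
    ¬ ∃ (r : ℕ) (q : Fin r → MvPolynomial (Fin 3) ℝ),
      (X 0)^4 * (X 1)^2 + (X 0)^2 * (X 1)^4
        - 3 * (X 0)^2 * (X 1)^2 * (X 2)^2 + (X 2)^6
      = ∑ i, (q i)^2 := by
  rintro ⟨r, q, h⟩
  have hcoeff := coeff_xyz_sq_of_motzkin_eq_sum_sq h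
  rw [coeff_motzkin_xyz_sq] at hcoeff
  have hnonneg : 0 ≤ ∑ i, coeff (equivFunOnFinite.symm 1) (q i) ^ 2 :=
    sum_nonneg fun i _ => sq_nonneg _
  linarith
end

section
/- (Bernstein's theorem) If a univariate real polynomial f satisfies f(x) > 0 for all x ∈ [-1,1], then there exist a natural number d and nonnegative reals c_{i,j} (for i + j = d) such that f(x) = Σ_{i+j=d} c_{i,j} (1+x)^i (1-x)^j. -/
/-!
Substituting `x = 2y - 1` reduces the theorem to a polynomial `g` positive on `[0, 1]` and the
Bernstein basis `bernsteinPolynomial ℝ d i = (d choose i) yⁱ (1 - y)^(d - i)`. Since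
`yᵐ = ∑ᵢ (i)ₘ / (d)ₘ • bernsteinPolynomial ℝ d i` with falling factorials `(i)ₘ`, the `i`-th
coefficient of `g` in the Bernstein basis of degree `d` is `∑ₘ gₘ (i)ₘ / (d)ₘ`. As
`(i)ₘ / (d)ₘ = ∏_{k < m} (i - k) / (d - k)` is within `2m² / d` of `(i / d)ᵐ` when `2m ≤ d`, this
coefficient is within `O(1 / d)` of `g (i / d)`, which is bounded below by the positive minimum of `g` on `[0, 1]`.
Hence all coefficients are nonnegative once `d` is large.
-/

open Polynomial Finset

theorem Finset.norm_prod_sub_prod_le {ι R : Type*} [NormedCommRing R] [NormOneClass R]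
    (s : Finset ι) {a b : ι → R} (ha : ∀ i ∈ s, ‖a i‖ ≤ 1) (hb : ∀ i ∈ s, ‖b i‖ ≤ 1) :
    ‖∏ i ∈ s, a i - ∏ i ∈ s, b i‖ ≤ ∑ i ∈ s, ‖a i - b i‖ := by
  classical
  induction s using Finset.induction_on with
  | empty => simp
  | insert j s hj ih =>
    simp only [mem_insert, forall_eq_or_imp] at ha hb
    have hprod_b : ‖∏ i ∈ s, b i‖ ≤ 1 :=
      (Finset.norm_prod_le s b).trans (prod_le_one (fun _ _ => norm_nonneg _) hb.2)
    rw [prod_insert hj, prod_insert hj, sum_insert hj]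
    calc ‖a j * ∏ i ∈ s, a i - b j * ∏ i ∈ s, b i‖
        = ‖a j * (∏ i ∈ s, a i - ∏ i ∈ s, b i) + (a j - b j) * ∏ i ∈ s, b i‖ := by ring_nf
      _ ≤ ‖a j‖ * ‖∏ i ∈ s, a i - ∏ i ∈ s, b i‖ + ‖a j - b j‖ * ‖∏ i ∈ s, b i‖ :=
        norm_add_le_of_le (norm_mul_le _ _) (norm_mul_le _ _)
      _ ≤ 1 * ∑ i ∈ s, ‖a i - b i‖ + ‖a j - b j‖ * 1 := by
        gcongr
        exacts [ha.1, ih ha.2 hb.2]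
      _ = ‖a j - b j‖ + ∑ i ∈ s, ‖a i - b i‖ := by ring

section Ratio

variable {𝕜 : Type*} [Field 𝕜] [LinearOrder 𝕜] [IsStrictOrderedRing 𝕜] {i d k : 𝕜}

theorem abs_sub_div_sub_le_one (hi : 0 ≤ i) (hid : i ≤ d) (hkd : 2 * k < d) :
    |(i - k) / (d - k)| ≤ 1 := by
  rw [abs_div, abs_of_pos (by linarith : 0 < d - k), div_le_one (by linarith), abs_le]
  constructor <;> linarith

theorem abs_sub_div_sub_sub_div_le (hi : 0 ≤ i) (hid : i ≤ d) (hk : 0 ≤ k) (hkd : 2 * k < d) :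
    |(i - k) / (d - k) - i / d| ≤ 2 * k / d := by
  have hdk : 0 < d - k := by linarith
  have hd : 0 < d := by linarith
  rw [div_sub_div _ _ hdk.ne' hd.ne', abs_div, abs_of_pos (mul_pos hdk hd),
    div_le_div_iff₀ (mul_pos hdk hd) hd, show (i - k) * d - (d - k) * i = -(k * (d - i)) by ring,
    abs_neg, abs_of_nonneg (mul_nonneg hk (sub_nonneg.2 hid))]
  have : d - i ≤ 2 * (d - k) := by linarith
  calc k * (d - i) * d ≤ k * (2 * (d - k)) * d := by gcongr
    _ = 2 * k * ((d - k) * d) := by ring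

end Ratio

theorem Nat.cast_descFactorial_div_eq_prod {K : Type*} [Field K] (i d m : ℕ) :
    (i.descFactorial m : K) / d.descFactorial m = ∏ k ∈ range m, ((i - k : K) / (d - k)) := by
  simp only [← descPochhammer_eval_eq_descFactorial, descPochhammer_eval_eq_prod_range,
    prod_div_distrib]

theorem Nat.abs_descFactorial_div_sub_pow_le {i d m : ℕ} (hid : i ≤ d) (hmd : 2 * m ≤ d) :
    |(i.descFactorial m : ℝ) / d.descFactorial m - (i / d : ℝ) ^ m| ≤ 2 * m ^ 2 / d := by
  have hi : (0 : ℝ) ≤ i := i.cast_nonneg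
  have hid' : (i : ℝ) ≤ d := by exact_mod_cast hid
  have hkd : ∀ k ∈ range m, 2 * (k : ℝ) < d := fun k hk => by
    have := mem_range.1 hk
    exact_mod_cast (by omega : 2 * k < d)
  rw [Nat.cast_descFactorial_div_eq_prod, pow_eq_prod_const]
  calc |∏ k ∈ range m, ((i - k : ℝ) / (d - k)) - ∏ _k ∈ range m, (i / d : ℝ)|
      ≤ ∑ k ∈ range m, |(i - k : ℝ) / (d - k) - i / d| := by
        refine norm_prod_sub_prod_le (R := ℝ) _ (fun k hk => ?_) (fun _ _ => ?_)
        · exact abs_sub_div_sub_le_one hi hid' (hkd k hk)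
        · rw [Real.norm_eq_abs, abs_of_nonneg (by positivity)]
          exact div_le_one_of_le₀ hid' (by positivity)
    _ ≤ ∑ _k ∈ range m, 2 * (m : ℝ) / d := by
        refine sum_le_sum fun k hk => ?_
        have hkm : (k : ℝ) ≤ m := by exact_mod_cast (mem_range.1 hk).le
        exact (abs_sub_div_sub_sub_div_le hi hid' k.cast_nonneg (hkd k hk)).trans (by gcongr)
    _ = 2 * m ^ 2 / d := by rw [sum_const, card_range, nsmul_eq_mul]; ring

theorem Nat.choose_mul_descFactorial_eq {d i m : ℕ} (hmi : m ≤ i) :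
    d.choose i * i.descFactorial m = (d - m).choose (i - m) * d.descFactorial m := by
  rw [descFactorial_eq_factorial_mul_choose, descFactorial_eq_factorial_mul_choose, mul_left_comm,
    choose_mul hmi]
  ring

theorem bernsteinPolynomial.sum_descFactorial_div_smul {K : Type*} [Field K] [CharZero K]
    {m d : ℕ} (hmd : m ≤ d) :
    ∑ i ∈ range (d + 1), ((i.descFactorial m : K) / d.descFactorial m) • bernsteinPolynomial K d i
      = X ^ m := by
  have hd : (d.descFactorial m : K) ≠ 0 :=
    Nat.cast_ne_zero.2 (Nat.descFactorial_eq_zero_iff_lt.not.2 (not_lt.2 hmd))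
  have hterm : ∀ j ∈ range (d - m + 1),
      (((m + j).descFactorial m : K) / d.descFactorial m) • bernsteinPolynomial K d (m + j)
        = X ^ m * (X ^ j * (1 - X) ^ (d - m - j) * ((d - m).choose j : K[X])) := by
    intro j _
    have hcoeff : ((m + j).descFactorial m : K) / d.descFactorial m * d.choose (m + j)
        = (d - m).choose j := by
      have := Nat.choose_mul_descFactorial_eq (d := d) (Nat.le_add_right m j)
      rw [Nat.add_sub_cancel_left, mul_comm] at this
      rw [div_mul_eq_mul_div, div_eq_iff hd]
      exact_mod_cast this
    rw [smul_eq_C_mul, bernsteinPolynomial, ← C_eq_natCast, ← C_eq_natCast, ← hcoeff, C_mul,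
      show d - (m + j) = d - m - j by omega, pow_add]
    ring
  calc ∑ i ∈ range (d + 1), ((i.descFactorial m : K) / d.descFactorial m) • bernsteinPolynomial K d i
      = ∑ j ∈ range (d - m + 1),
          (((m + j).descFactorial m : K) / d.descFactorial m) • bernsteinPolynomial K d (m + j) := by
        rw [show d + 1 = m + (d - m + 1) by omega, sum_range_add, sum_eq_zero, zero_add]
        intro i hi
        rw [Nat.descFactorial_eq_zero_iff_lt.2 (mem_range.1 hi), Nat.cast_zero, zero_div, zero_smul]
    _ = X ^ m * (X + (1 - X)) ^ (d - m) := by rw [sum_congr rfl hterm, ← mul_sum, add_pow]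
    _ = X ^ m := by simp

noncomputable def bernsteinCoeff {K : Type*} [Field K] (g : K[X]) (d i : ℕ) : K :=
  ∑ m ∈ range (g.natDegree + 1), g.coeff m * ((i.descFactorial m : K) / d.descFactorial m)

theorem sum_bernsteinCoeff_smul {K : Type*} [Field K] [CharZero K] (g : K[X]) {d : ℕ}
    (hd : g.natDegree ≤ d) :
    ∑ i ∈ range (d + 1), bernsteinCoeff g d i • bernsteinPolynomial K d i = g := by
  calc ∑ i ∈ range (d + 1), bernsteinCoeff g d i • bernsteinPolynomial K d i
      = ∑ m ∈ range (g.natDegree + 1), g.coeff m • ∑ i ∈ range (d + 1),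
          ((i.descFactorial m : K) / d.descFactorial m) • bernsteinPolynomial K d i := by
        simp only [bernsteinCoeff, sum_smul, smul_sum, mul_smul]
        exact sum_comm
    _ = ∑ m ∈ range (g.natDegree + 1), C (g.coeff m) * X ^ m := by
        refine sum_congr rfl fun m hm => ?_
        rw [bernsteinPolynomial.sum_descFactorial_div_smul (by rw [mem_range] at hm; omega),
          smul_eq_C_mul]
    _ = g := g.as_sum_range_C_mul_X_pow.symm

theorem abs_bernsteinCoeff_sub_eval_le (g : ℝ[X]) {d i : ℕ} (hid : i ≤ d)
    (hd : 2 * g.natDegree ≤ d) :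
    |bernsteinCoeff g d i - g.eval (i / d : ℝ)|
      ≤ (∑ m ∈ range (g.natDegree + 1), |g.coeff m|) * (2 * g.natDegree ^ 2 / d) := by
  rw [eval_eq_sum_range, bernsteinCoeff, ← sum_sub_distrib, sum_mul]
  refine (abs_sum_le_sum_abs _ _).trans (sum_le_sum fun m hm => ?_)
  have hmn : m ≤ g.natDegree := Nat.lt_succ_iff.1 (mem_range.1 hm)
  rw [← mul_sub, abs_mul]
  gcongr
  exact (Nat.abs_descFactorial_div_sub_pow_le hid (by omega)).trans (by gcongr)

theorem exists_nonneg_sum_smul_bernsteinPolynomial (g : ℝ[X])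
    (hg : ∀ y ∈ Set.Icc (0 : ℝ) 1, 0 < g.eval y) :
    ∃ (d : ℕ) (a : ℕ → ℝ), (∀ i, 0 ≤ a i) ∧
      g = ∑ i ∈ range (d + 1), a i • bernsteinPolynomial ℝ d i := by
  set n := g.natDegree
  set L := ∑ m ∈ range (n + 1), |g.coeff m|
  obtain ⟨y₀, hy₀, hmin⟩ := isCompact_Icc.exists_isMinOn (Set.nonempty_Icc.2 zero_le_one)
    g.continuous.continuousOn
  obtain ⟨d, hd_err, hd_deg⟩ :=
    (((tendsto_const_div_atTop_nhds_zero_nat (L * (2 * n ^ 2))).eventually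
      (gt_mem_nhds (hg y₀ hy₀))).and (Filter.eventually_ge_atTop (2 * n))).exists
  have hcoeff : ∀ i ≤ d, 0 ≤ bernsteinCoeff g d i := by
    intro i hid
    have hy : (i / d : ℝ) ∈ Set.Icc 0 1 :=
      ⟨by positivity, div_le_one_of_le₀ (by exact_mod_cast hid) (by positivity)⟩
    have herr := abs_le.1 (abs_bernsteinCoeff_sub_eval_le g hid hd_deg)
    have hmin_le : g.eval y₀ ≤ g.eval (i / d : ℝ) := hmin hy
    rw [← mul_div_assoc] at herr
    linarith
  refine ⟨d, fun i => max (bernsteinCoeff g d i) 0, fun i => le_max_right _ _, ?_⟩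
  conv_lhs => rw [← sum_bernsteinCoeff_smul g (by omega : n ≤ d)]
  refine sum_congr rfl fun i hi => ?_
  simp only [max_eq_left (hcoeff i (Nat.lt_succ_iff.1 (mem_range.1 hi)))]

theorem bernstein_theorem (f : Polynomial ℝ)
    (hf : ∀ x ∈ Set.Icc (-1 : ℝ) 1, 0 < f.eval x) :
    ∃ (d : ℕ) (c : ℕ → ℝ), (∀ i, 0 ≤ c i) ∧
      f = ∑ i ∈ Finset.range (d + 1),
        C (c i) * (1 + X)^i * (1 - X)^(d - i) := by
  have hg : ∀ y ∈ Set.Icc (0 : ℝ) 1, 0 < (f.comp (C 2 * X - 1)).eval y := fun y hy => by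
    simpa using hf (2 * y - 1) ⟨by linarith [hy.1], by linarith [hy.2]⟩
  obtain ⟨d, a, ha, hfa⟩ := exists_nonneg_sum_smul_bernsteinPolynomial _ hg
  refine ⟨d, fun i => a i * d.choose i / 2 ^ d, fun i => by have := ha i; positivity,
    Polynomial.funext fun x => ?_⟩
  have hx := congrArg (eval ((1 + x) / 2)) hfa
  simp only [eval_comp, eval_finsetSum, eval_smul, bernsteinPolynomial, eval_mul, eval_pow,
    eval_sub, eval_C, eval_X, eval_one, eval_natCast, smul_eq_mul,
    show 2 * ((1 + x) / 2) - 1 = x by ring, show 1 - (1 + x) / 2 = (1 - x) / 2 by ring] at hx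
  simp only [eval_finsetSum, eval_mul, eval_pow, eval_sub, eval_add, eval_C, eval_X, eval_one]
  rw [hx]
  refine sum_congr rfl fun i hi => ?_
  have h2d : (2 : ℝ) ^ d = 2 ^ i * 2 ^ (d - i) := by
    rw [← pow_add, Nat.add_sub_cancel' (Nat.lt_succ_iff.1 (mem_range.1 hi))]
  rw [h2d, div_pow, div_pow]
  field_simp
end

section
/- (Robinson's generalization of Motzkin's example, nonnegativity instance) Let f ∈ ℝ[x_1,...,x_n] with deg f < 2n. If f is not a sum of squares of polynomials, then the polynomial p(x) = (Π_{i=1}^n x_i^2) f(x) + 1 is not a sum of squares of polynomials. -/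
open MvPolynomial

lemma aux_coeff_line {n : ℕ} (a : Fin n → ℝ) (q : MvPolynomial (Fin n) ℝ) (e : ℕ) :
    (aeval (fun i => Polynomial.C (a i) * Polynomial.X) q).coeff e
      = eval a (homogeneousComponent e q) := by
  induction q using MvPolynomial.induction_on' with
  | add p q hp hq => simp [map_add, Polynomial.coeff_add, hp, hq]
  | monomial u c =>
    have hcomp : homogeneousComponent e (monomial u c)
        = if e = u.degree then monomial u c else 0 :=
      homogeneousComponent_of_mem ((mem_homogeneousSubmodule _ _).2
        (isHomogeneous_monomial c rfl))
    have hprod : (u.prod fun j e' => (Polynomial.C (a j) * Polynomial.X) ^ e')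
        = Polynomial.C (u.prod fun j e' => (a j) ^ e') * Polynomial.X ^ u.degree := by
      rw [Finsupp.prod, Finsupp.prod, Finsupp.degree_apply, ← Finset.prod_pow_eq_pow_sum,
        map_prod, ← Finset.prod_mul_distrib]
      exact Finset.prod_congr rfl fun j _ => by rw [mul_pow, map_pow]
    rw [aeval_monomial, hprod, hcomp, Polynomial.algebraMap_eq, ← mul_assoc, ← Polynomial.C_mul,
      Polynomial.coeff_C_mul_X_pow]
    split_ifs with h1
    · subst h1; rw [eval_monomial]
    · rw [map_zero]

lemma aux_exists_eval_ne {n : ℕ} {p : MvPolynomial (Fin n) ℝ} (hp : p ≠ 0) :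
    ∃ a : Fin n → ℝ, eval a p ≠ 0 := by
  by_contra hc
  push_neg at hc
  exact hp (MvPolynomial.funext fun x => by rw [hc x, map_zero])

lemma aux_coeff_sq {p : Polynomial ℝ} {d : ℕ} (hp : p.natDegree ≤ d) :
    (p ^ 2).coeff (2 * d) = p.coeff d ^ 2 := by
  rw [sq, sq, Polynomial.coeff_mul]
  rw [Finset.sum_eq_single (d, d)]
  · intro b hb hne
    rw [Finset.HasAntidiagonal.mem_antidiagonal] at hb
    rcases lt_or_ge d b.1 with h | h
    · rw [Polynomial.coeff_eq_zero_of_natDegree_lt (lt_of_le_of_lt hp h), zero_mul]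
    · have : d < b.2 := by
        rcases lt_or_eq_of_le h with h' | h'
        · omega
        · exfalso; apply hne; rw [Prod.ext_iff]; constructor <;> simp <;> omega
      rw [Polynomial.coeff_eq_zero_of_natDegree_lt (lt_of_le_of_lt hp this), mul_zero]
  · intro h
    exact absurd (Finset.HasAntidiagonal.mem_antidiagonal.2 (by omega)) h

lemma aux_natDegree_line {n : ℕ} (a : Fin n → ℝ) (q : MvPolynomial (Fin n) ℝ) :
    (aeval (fun i => Polynomial.C (a i) * Polynomial.X) q).natDegree ≤ q.totalDegree := by
  rw [Polynomial.natDegree_le_iff_coeff_eq_zero]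
  intro e he
  rw [aux_coeff_line, homogeneousComponent_eq_zero _ _ he, map_zero]

lemma aux_homComp_totalDegree_ne_zero {n : ℕ} {q : MvPolynomial (Fin n) ℝ} (hq : q ≠ 0) :
    homogeneousComponent q.totalDegree q ≠ 0 := by
  obtain ⟨m, hm, hms⟩ := q.support.exists_mem_eq_sup (support_nonempty.2 hq)
    (fun s => s.sum fun _ e => e)
  intro h0
  have : coeff m (homogeneousComponent q.totalDegree q) = coeff m q := by
    rw [coeff_homogeneousComponent, if_pos]
    rw [totalDegree, hms]; rfl
  rw [h0] at this
  exact (mem_support_iff.1 hm) (by simpa using this.symm)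

lemma sos_totalDegree {n r : ℕ} (h : Fin r → MvPolynomial (Fin n) ℝ) (k : Fin r) :
    2 * (h k).totalDegree ≤ (∑ i, h i ^ 2).totalDegree := by
  set d := Finset.univ.sup fun i => (h i).totalDegree with hd
  have hkd : (h k).totalDegree ≤ d := Finset.le_sup (f := fun i => (h i).totalDegree) (Finset.mem_univ k)
  have hmain : 2 * d ≤ (∑ i, h i ^ 2).totalDegree := by
    rcases Nat.eq_zero_or_pos d with h0 | hpos
    · omega
    obtain ⟨j, _, hj⟩ := Finset.exists_mem_eq_sup Finset.univ
      ⟨k, Finset.mem_univ k⟩ fun i => (h i).totalDegree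
    have hjne : h j ≠ 0 := by
      intro h0
      rw [h0] at hj
      simp [← hd] at hj
      omega
    obtain ⟨a, ha⟩ := aux_exists_eval_ne
      (aux_homComp_totalDegree_ne_zero hjne)
    set φ := (aeval fun i => Polynomial.C (a i) * Polynomial.X :
        MvPolynomial (Fin n) ℝ →ₐ[ℝ] Polynomial ℝ) with hφ
    have hcoeff : (φ (∑ i, h i ^ 2)).coeff (2 * d)
        = ∑ i, (eval a (homogeneousComponent d (h i))) ^ 2 := by
      rw [map_sum, Polynomial.finset_sum_coeff]
      refine Finset.sum_congr rfl fun i _ => ?_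
      have hnd : (φ (h i)).natDegree ≤ d :=
        le_trans (aux_natDegree_line a (h i))
          (Finset.le_sup (f := fun i => (h i).totalDegree) (Finset.mem_univ i))
      rw [map_pow, aux_coeff_sq hnd]
      rw [hφ]
      rw [aux_coeff_line]
    have hne : (φ (∑ i, h i ^ 2)).coeff (2 * d) ≠ 0 := by
      rw [hcoeff]
      have hle : (eval a (homogeneousComponent d (h j))) ^ 2
          ≤ ∑ i, (eval a (homogeneousComponent d (h i))) ^ 2 :=
        Finset.single_le_sum (f := fun i => (eval a (homogeneousComponent d (h i))) ^ 2)
          (fun i _ => sq_nonneg _) (Finset.mem_univ j)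
      have hpos : 0 < (eval a (homogeneousComponent d (h j))) ^ 2 := by
        have : eval a (homogeneousComponent d (h j)) ≠ 0 := by rw [hd, hj]; exact ha
        exact lt_of_le_of_ne (sq_nonneg _) (Ne.symm (pow_ne_zero 2 this))
      exact (lt_of_lt_of_le hpos hle).ne'
    calc 2 * d ≤ (φ (∑ i, h i ^ 2)).natDegree := Polynomial.le_natDegree_of_ne_zero hne
      _ ≤ (∑ i, h i ^ 2).totalDegree := aux_natDegree_line a _
  omega


lemma aux_coeff_update {n : ℕ} (i : Fin n) (q : MvPolynomial (Fin n) ℝ) (m : Fin n →₀ ℕ) :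
    coeff m (aeval (Function.update X i (0 : MvPolynomial (Fin n) ℝ)) q)
      = if m i = 0 then coeff m q else 0 := by
  induction q using MvPolynomial.induction_on' with
  | add p q hp hq =>
    rw [map_add, coeff_add, hp, hq, coeff_add]
    split_ifs <;> simp
  | monomial u c =>
    rw [aeval_monomial, MvPolynomial.algebraMap_eq]
    by_cases hui : u i = 0
    · have hprod : (u.prod fun j e' => (Function.update X i (0 : MvPolynomial (Fin n) ℝ) j) ^ e')
          = u.prod fun j e' => (X j) ^ e' := by
        apply Finsupp.prod_congr
        intro j hj
        have : j ≠ i := fun h => by subst h; exact (Finsupp.mem_support_iff.1 hj) hui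
        rw [Function.update_of_ne this]
      rw [hprod, ← monomial_eq]
      split_ifs with h2
      · rfl
      · rw [coeff_monomial, if_neg]
        intro h; subst h; exact h2 hui
    · have hzero : (u.prod fun j e' => (Function.update X i (0 : MvPolynomial (Fin n) ℝ) j) ^ e') = 0 := by
        apply Finset.prod_eq_zero (Finsupp.mem_support_iff.2 hui)
        show Function.update X i (0 : MvPolynomial (Fin n) ℝ) i ^ u i = 0
        rw [Function.update_self]
        exact zero_pow hui
      rw [hzero, mul_zero, coeff_zero]
      split_ifs with h2
      · rw [coeff_monomial, if_neg]
        intro h; subst h; exact hui h2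
      · rfl

def IsSOS {n : ℕ} (p : MvPolynomial (Fin n) ℝ) : Prop :=
  ∃ (r : ℕ) (q : Fin r → MvPolynomial (Fin n) ℝ), p = ∑ i, (q i) ^ 2

lemma aux_eq_C_of_deg0 {n : ℕ} {p : MvPolynomial (Fin n) ℝ} (hp : p.totalDegree = 0) :
    p = C (coeff 0 p) := by
  ext m
  rw [coeff_C]
  by_cases hm : 0 = m
  · rw [if_pos hm, ← hm]
  · rw [if_neg hm]
    by_cases hms : m ∈ p.support
    · exfalso
      apply hm
      ext i
      rw [Finsupp.zero_apply]
      exact (((totalDegree_eq_zero_iff _ p).1 hp) m hms i).symm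
    · exact notMem_support_iff.1 hms

theorem robinson_generalization (n : ℕ) (f : MvPolynomial (Fin n) ℝ)
    (hdeg : f.totalDegree < 2 * n) (hf : ¬ IsSOS f) :
    ¬ IsSOS ((∏ i, (X i) ^ 2) * f + 1) := by
  rintro ⟨r, h, heq⟩
  -- n is positive
  have hn : 0 < n := by
    rcases Nat.eq_zero_or_pos n with rfl | h'
    · omega
    · exact h'
  set i₀ : Fin n := ⟨0, hn⟩ with hi₀
  -- the exponent of the monomial x₁⋯x_n
  set s₀ : Fin n →₀ ℕ := ∑ i, Finsupp.single i 1 with hs₀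
  have hs₀app : ∀ j, s₀ j = 1 := by
    intro j
    rw [hs₀, Finsupp.finset_sum_apply]
    simp [Finsupp.single_apply]
  have hs₀sum : (s₀.sum fun _ e => e) = n := by
    rw [Finsupp.sum]
    have hsupp : s₀.support = Finset.univ := by
      ext j; simp [Finsupp.mem_support_iff, hs₀app j]
    rw [hsupp]
    simp [hs₀app]
  -- the product of variables as a monomial
  have hprodX : ∀ s : Finset (Fin n),
      (∏ i ∈ s, (X i : MvPolynomial (Fin n) ℝ)) = monomial (∑ i ∈ s, Finsupp.single i 1) 1 := by
    intro s
    induction s using Finset.induction_on with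
    | empty => simp
    | insert _ _ hx ih =>
      rw [Finset.prod_insert hx, Finset.sum_insert hx, ih, X, monomial_mul, one_mul]
  have hM : (∏ i, ((X i : MvPolynomial (Fin n) ℝ)) ^ 2)
      = monomial s₀ 1 * monomial s₀ 1 := by
    rw [Finset.prod_pow, hprodX, ← hs₀, pow_two, monomial_mul, one_mul]
  set m₀ : MvPolynomial (Fin n) ℝ := monomial s₀ 1 with hm₀
  have hm₀ne : m₀ ≠ 0 := by
    rw [hm₀, Ne, monomial_eq_zero]
    exact one_ne_zero
  -- degree bound on the h k
  have hdegP : (∑ i, h i ^ 2).totalDegree ≤ 2 * n + f.totalDegree := by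
    rw [← heq]
    refine le_trans (totalDegree_add _ _) (max_le ?_ (by rw [totalDegree_one]; omega))
    refine le_trans (totalDegree_mul _ _) ?_
    have h1 : (∏ i, ((X i : MvPolynomial (Fin n) ℝ)) ^ 2).totalDegree ≤ 2 * n := by
      refine le_trans (totalDegree_finset_prod _ _) ?_
      have : ∀ i : Fin n, ((X i : MvPolynomial (Fin n) ℝ) ^ 2).totalDegree = 2 := fun i =>
        totalDegree_X_pow _ _
      simp [this]
      omega
    omega
  have hdeghk : ∀ k, (h k).totalDegree ≤ 2 * n - 1 := by
    intro k
    have := sos_totalDegree h k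
    omega
  -- the constants d k
  set d : Fin r → ℝ := fun k => coeff 0 (h k) with hd
  -- substituting x_i := 0 in the identity
  have hconst : ∀ (i : Fin n) (k : Fin r),
      aeval (Function.update X i (0 : MvPolynomial (Fin n) ℝ)) (h k) = C (d k) := by
    intro i k
    set σi := (aeval (Function.update X i (0 : MvPolynomial (Fin n) ℝ)) :
      MvPolynomial (Fin n) ℝ →ₐ[ℝ] MvPolynomial (Fin n) ℝ) with hσi
    have hsub : ∑ k, (σi (h k)) ^ 2 = 1 := by
      have hc := congrArg σi heq
      rw [map_add, map_mul, map_prod, map_one, map_sum] at hc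
      have hz : (∏ j, σi ((X j : MvPolynomial (Fin n) ℝ) ^ 2)) = 0 := by
        apply Finset.prod_eq_zero (Finset.mem_univ i)
        rw [map_pow, hσi, aeval_X, Function.update_self]
        exact zero_pow two_ne_zero
      rw [hz, zero_mul, zero_add] at hc
      have h4 : ∑ k, σi (h k) ^ 2 = ∑ k, σi (h k ^ 2) :=
        Finset.sum_congr rfl fun k _ => (map_pow _ _ _).symm
      rw [h4, ← hc]
    have hdeg0 : (σi (h k)).totalDegree = 0 := by
      have h1 := sos_totalDegree (fun k => σi (h k)) k
      rw [hsub, totalDegree_one] at h1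
      omega
    have h2 := aux_eq_C_of_deg0 hdeg0
    have h3 : coeff 0 (σi (h k)) = coeff 0 (h k) := by
      rw [hσi, aux_coeff_update i (h k) 0]
      simp
    rw [hσi] at h2 ⊢
    rw [h2, h3]
  -- coefficients of h k - C (d k) vanish off the "all exponents positive" region
  set q : Fin r → MvPolynomial (Fin n) ℝ := fun k => h k - C (d k) with hq
  have hqcoeff : ∀ (k : Fin r) (m : Fin n →₀ ℕ) (i : Fin n), m i = 0 → coeff m (q k) = 0 := by
    intro k m i hi
    have h2 := aux_coeff_update i (h k) m
    rw [hconst i k, if_pos hi, coeff_C] at h2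
    rw [hq]
    simp only [coeff_sub, coeff_C, ← h2, sub_self]
  -- q k is divisible by the monomial x₁⋯x_n
  set g : Fin r → MvPolynomial (Fin n) ℝ := fun k => MvPolynomial.divMonomial (q k) s₀ with hg
  have hmod : ∀ k, MvPolynomial.modMonomial (q k) s₀ = 0 := by
    intro k
    ext m
    rw [coeff_zero]
    by_cases hle : s₀ ≤ m
    · exact coeff_modMonomial_of_le _ hle
    · rw [coeff_modMonomial_of_not_le _ hle]
      rw [Finsupp.le_def] at hle
      push_neg at hle
      obtain ⟨i, hi⟩ := hle
      rw [hs₀app i] at hi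
      exact hqcoeff k m i (by omega)
  have hfact : ∀ k, m₀ * g k = q k := by
    intro k
    have := MvPolynomial.divMonomial_add_modMonomial (q k) s₀
    rw [hmod k, add_zero] at this
    exact this
  have hrep : ∀ k, h k = C (d k) + m₀ * g k := by
    intro k
    rw [hfact k, hq]
    ring
  -- degree bound on g k
  have hdegg : ∀ k, (g k).totalDegree ≤ n - 1 := by
    intro k
    apply Finset.sup_le
    intro m hm
    have hmem : s₀ + m ∈ (q k).support := by
      rw [mem_support_iff]
      have h5 := mem_support_iff.1 hm
      simpa [hg, coeff_divMonomial] using h5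
    have h1 : ((s₀ + m).sum fun _ e => e) ≤ (q k).totalDegree := le_totalDegree hmem
    have h2 : (q k).totalDegree ≤ 2 * n - 1 := by
      rw [hq]
      exact le_trans (totalDegree_sub_C_le _ _) (hdeghk k)
    have h3 : ((s₀ + m).sum fun _ e => e) = n + (m.sum fun _ e => e) := by
      rw [Finsupp.sum_add_index' (fun _ => rfl) (fun _ _ _ => rfl), hs₀sum]
    show (m.sum fun _ e => e) ≤ n - 1
    omega
  -- the sum of the d k squared is 1
  have hsum1 : ∑ k, d k ^ 2 = 1 := by
    have hc := congrArg (eval (0 : Fin n → ℝ)) heq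
    rw [map_add, map_mul, map_one, map_sum, map_prod] at hc
    have hz : (∏ j, eval (0 : Fin n → ℝ) ((X j : MvPolynomial (Fin n) ℝ) ^ 2)) = 0 := by
      apply Finset.prod_eq_zero (Finset.mem_univ i₀)
      rw [map_pow, eval_X]
      exact zero_pow two_ne_zero
    rw [hz, zero_mul, zero_add] at hc
    have h6 : ∀ k : Fin r, eval (0 : Fin n → ℝ) (h k ^ 2) = d k ^ 2 := by
      intro k
      rw [map_pow, eval_zero, constantCoeff_eq, hd]
    calc ∑ k, d k ^ 2 = ∑ k, eval (0 : Fin n → ℝ) (h k ^ 2) :=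
          Finset.sum_congr rfl fun k _ => (h6 k).symm
      _ = 1 := hc.symm
  -- expansion of the sum of squares
  set s : MvPolynomial (Fin n) ℝ := ∑ k, C (2 * d k) * g k with hs
  set t : MvPolynomial (Fin n) ℝ := ∑ k, g k ^ 2 with ht
  have hexp : ∑ k, h k ^ 2 = C (∑ k, d k ^ 2) + (m₀ * s + m₀ * (m₀ * t)) := by
    have hterm : ∀ k : Fin r, h k ^ 2
        = C (d k ^ 2) + (m₀ * (C (2 * d k) * g k) + m₀ * (m₀ * g k ^ 2)) := by
      intro k
      have e1 : (C (d k ^ 2) : MvPolynomial (Fin n) ℝ) = C (d k) ^ 2 := map_pow _ _ _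
      have e2 : (C (2 * d k) : MvPolynomial (Fin n) ℝ) = 2 * C (d k) := by
        rw [map_mul, map_ofNat]
      rw [hrep k, e1, e2]
      ring
    calc ∑ k, h k ^ 2
        = ∑ k, (C (d k ^ 2) + (m₀ * (C (2 * d k) * g k) + m₀ * (m₀ * g k ^ 2))) :=
          Finset.sum_congr rfl fun k _ => hterm k
      _ = (∑ k, C (d k ^ 2))
            + ((∑ k, m₀ * (C (2 * d k) * g k)) + (∑ k, m₀ * (m₀ * g k ^ 2))) := by
          rw [Finset.sum_add_distrib, Finset.sum_add_distrib]
      _ = C (∑ k, d k ^ 2) + (m₀ * s + m₀ * (m₀ * t)) := by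
          rw [← Finset.mul_sum, ← Finset.mul_sum, ← Finset.mul_sum, ← map_sum, hs, ht]
  have heq2 : m₀ * (m₀ * f) = m₀ * (s + m₀ * t) := by
    have h7 := heq
    rw [hM, hexp, hsum1, map_one] at h7
    linear_combination h7
  have hcancel : m₀ * f = s + m₀ * t := mul_left_cancel₀ hm₀ne heq2
  have hkey : m₀ * (f - t) = s := by linear_combination hcancel
  have hdegs : s.totalDegree ≤ n - 1 := by
    rw [hs]
    refine le_trans (totalDegree_finset_sum _ _) ?_
    apply Finset.sup_le
    intro k _
    refine le_trans (totalDegree_mul _ _) ?_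
    rw [totalDegree_C]
    simpa using hdegg k
  have hft : f = t := by
    by_contra hne
    obtain ⟨m', hm'⟩ := support_nonempty.2 (sub_ne_zero.2 hne)
    have hdm := MvPolynomial.divMonomial_monomial_mul s₀ (f - t)
    have hco : coeff (s₀ + m') (m₀ * (f - t)) = coeff m' (f - t) :=
      calc coeff (s₀ + m') (m₀ * (f - t))
          = coeff m' (MvPolynomial.divMonomial (m₀ * (f - t)) s₀) :=
            (coeff_divMonomial _ _ _).symm
        _ = coeff m' (f - t) := by rw [hm₀, hdm]
    have h8 : coeff (s₀ + m') s ≠ 0 := by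
      rw [← hkey, hco]
      exact mem_support_iff.1 hm'
    have h9 := le_totalDegree (mem_support_iff.2 h8)
    have h10 : ((s₀ + m').sum fun _ e => e) = n + (m'.sum fun _ e => e) := by
      rw [Finsupp.sum_add_index' (fun _ => rfl) (fun _ _ _ => rfl), hs₀sum]
    have h11 := hdegs
    omega
  exact hf ⟨r, g, hft.trans ht⟩
end

section
/- (Parameter-dependent Lyapunov LMI, affine case) Let A(α) = Σ_{i=1}^l A_i α_i and P(α) = Σ_{i=1}^l P_i α_i with P_i symmetric. Suppose P_i ≻ 0 for all i, A_i^T P_i + P_i A_i ≺ 0 for all i, and A_i^T P_j + A_j^T P_i + P_j A_i + P_i A_j ≺ 0 for all 1 ≤ i < j ≤ l. Then for every α in the unit simplex Δ^l, P(α) ≻ 0 and A(α)^T P(α) + P(α) A(α) ≺ 0. -/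
/-!
Expanding `A(α)ᵀ P(α) + P(α) A(α)` bilinearly writes the negated Lyapunov expression as a
combination, with nonnegative weights `α i ^ 2` and `α i * α j`, of the negative definite
matrices of the hypotheses. Some `α i₀` is positive, so the weight `α i₀ ^ 2` is positive,
and such a combination of positive definite matrices is positive definite.
-/

open Matrix

theorem Finset.sum_sum_eq_sum_diag_add_sum_lt {ι M : Type*} [LinearOrder ι] [AddCommMonoid M]
    (s : Finset ι) (f : ι → ι → M) :
    ∑ i ∈ s, ∑ j ∈ s, f i j = ∑ i ∈ s, f i i + ∑ i ∈ s, ∑ j ∈ s with i < j, (f i j + f j i) := by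
  have split_row : ∀ i ∈ s, ∑ j ∈ s, f i j
      = f i i + ∑ j ∈ s with i < j, f i j + ∑ j ∈ s with j < i, f i j := by
    intro i hi
    rw [← Finset.add_sum_erase s _ hi, add_assoc, ← Finset.sum_filter_add_sum_filter_not _ (i < ·)]
    congr 2 <;> congr 1 <;> ext j <;> simp only [Finset.mem_filter, Finset.mem_erase] <;> grind
  have swap : ∑ i ∈ s, ∑ j ∈ s with j < i, f i j = ∑ i ∈ s, ∑ j ∈ s with i < j, f j i :=
    Finset.sum_comm' (by intros; simp only [Finset.mem_filter]; tauto)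
  rw [Finset.sum_congr rfl split_row, Finset.sum_add_distrib, Finset.sum_add_distrib, swap,
    add_assoc, ← Finset.sum_add_distrib]
  simp only [Finset.sum_add_distrib]

theorem Matrix.posDef_sum_smul {ι m R : Type*} [CommRing R] [PartialOrder R] [StarRing R]
    [StarOrderedRing R] [IsStrictOrderedRing R] {s : Finset ι} {c : ι → R}
    {M : ι → Matrix m m R} (hc : ∀ i ∈ s, 0 ≤ c i) (hpos : ∃ i ∈ s, 0 < c i)
    (hM : ∀ i ∈ s, (M i).PosDef) : (∑ i ∈ s, c i • M i).PosDef := by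
  classical
  obtain ⟨i, hi, hci⟩ := hpos
  rw [← Finset.add_sum_erase s _ hi]
  exact ((hM i hi).smul hci).add_posSemidef <| posSemidef_sum _ fun j hj =>
    (hM j (Finset.mem_of_mem_erase hj)).posSemidef.smul (hc j (Finset.mem_of_mem_erase hj))

section Expansion

variable {ι m R : Type*} [Fintype ι] [Fintype m] [CommRing R]

theorem Matrix.transpose_mul_add_mul_sum_smul (α : ι → R) (A P : ι → Matrix m m R) :
    (∑ i, α i • A i)ᵀ * (∑ i, α i • P i) + (∑ i, α i • P i) * (∑ i, α i • A i)
      = ∑ i, ∑ j, (α i * α j) • ((A i)ᵀ * P j + P i * A j) := by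
  simp only [transpose_sum, transpose_smul, Finset.sum_mul_sum, smul_mul_smul_comm, smul_add,
    Finset.sum_add_distrib]

theorem Matrix.neg_transpose_mul_add_mul_sum_smul [LinearOrder ι] (α : ι → R)
    (A P : ι → Matrix m m R) :
    -((∑ i, α i • A i)ᵀ * (∑ i, α i • P i) + (∑ i, α i • P i) * (∑ i, α i • A i))
      = ∑ i, α i ^ 2 • -((A i)ᵀ * P i + P i * A i)
        + ∑ i, ∑ j with i < j,
            (α i * α j) • -((A i)ᵀ * P j + (A j)ᵀ * P i + P j * A i + P i * A j) := by
  rw [transpose_mul_add_mul_sum_smul, Finset.sum_sum_eq_sum_diag_add_sum_lt, neg_add,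
    ← Finset.sum_neg_distrib, ← Finset.sum_neg_distrib]
  congr 1
  · refine Finset.sum_congr rfl fun i _ => ?_
    module
  · refine Finset.sum_congr rfl fun i _ => ?_
    rw [← Finset.sum_neg_distrib]
    refine Finset.sum_congr rfl fun j _ => ?_
    module

end Expansion

theorem parameter_dependent_lyapunov (n l : ℕ)
    (A : Fin l → Matrix (Fin n) (Fin n) ℝ)
    (P : Fin l → Matrix (Fin n) (Fin n) ℝ)
    (hP : ∀ i, (P i).PosDef)
    (hAii : ∀ i, (-((A i)ᵀ * P i + P i * A i)).PosDef)
    (hAij : ∀ i j, i < j →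
      (-((A i)ᵀ * P j + (A j)ᵀ * P i + P j * A i + P i * A j)).PosDef) :
    ∀ α : Fin l → ℝ, (∀ i, 0 ≤ α i) → (∑ i, α i) = 1 →
      (∑ i, α i • P i).PosDef ∧
      (-((∑ i, α i • A i)ᵀ * (∑ i, α i • P i)
          + (∑ i, α i • P i) * (∑ i, α i • A i))).PosDef := by
  intro α hα hsum
  obtain ⟨i₀, hi₀, hα₀⟩ : ∃ i ∈ Finset.univ, (0 : ℝ) < α i :=
    Finset.exists_lt_of_sum_lt (by simp [hsum])
  refine ⟨posDef_sum_smul (fun i _ => hα i) ⟨i₀, hi₀, hα₀⟩ fun i _ => hP i, ?_⟩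
  rw [neg_transpose_mul_add_mul_sum_smul]
  have diagonal_part := posDef_sum_smul (fun i _ => sq_nonneg (α i)) ⟨i₀, hi₀, pow_pos hα₀ 2⟩
    fun i _ => hAii i
  have cross_part := posSemidef_sum Finset.univ fun i _ => posSemidef_sum {j | i < j} fun j hj =>
    (hAij i j (Finset.mem_filter.1 hj).2).posSemidef.smul (mul_nonneg (hα i) (hα j))
  exact diagonal_part.add_posSemidef cross_part
end
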